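/- arXiv:1003.5744 — 2 statements merged into one kernel-verified Lean document; each statement's English description precedes it below -/
import Mathlib

section
/- Let X be a set with d : X × X × X → ℝ satisfying (Sym), (Tetr), (Z), (N), (B) and (Trans), and let (x_i) be a sequence in X which is not Cauchy with respect to φ. Suppose LIM(y,(x_i)) and LIM(y′,(x_i)) hold, φ(y,y′) > 0, and y″ is a point with d(y,y′,y″) = 0. Then LIM(y″,(x_i)) holds. -/
open Filter Topology

/-!
Since `(x_i)` is not Cauchy, arbitrarily late pairs `x_n, x_m` admit a point `z` with
`d(x_n, x_m, z)` bounded below. Applying (Trans) to `y, y'` at such a pair shows that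
`d(y, y', x_n)` is small, and (Tetr) spreads this to all late `x_i`: `d(y, y', x_i) → 0`.
Since `y''` lies on the line `y y'` and `d(y, y', z₀) > 0` for some `z₀`, (Trans) bounds
`d(y, y'', x_i) · d(y, y', z₀)` by `d(y, y', x_i)`, so `d(y, y'', x_i) → 0` as well, and (Tetr)
with pivot `y` transfers `LIM(y, (x_i))` to `LIM(y'', (x_i))`.
-/

def IsLim {X : Type*} (d : X → X → X → ℝ) (y : X) (x : ℕ → X) : Prop :=
  ∀ ε > (0 : ℝ), ∃ N : ℕ, ∀ i ≥ N, ∀ j ≥ N, d y (x i) (x j) < ε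

section

variable {X : Type*} {d : X → X → X → ℝ}

theorem d_rotate (hSym₁ : ∀ x y z : X, d x y z = d y x z)
    (hSym₂ : ∀ x y z : X, d x y z = d x z y) (a b c : X) : d a b c = d b c a := by
  rw [hSym₁, hSym₂]

theorem d_nonneg (hSym₁ : ∀ x y z : X, d x y z = d y x z)
    (hSym₂ : ∀ x y z : X, d x y z = d x z y)
    (hTetr : ∀ a b c x : X, d a b c ≤ d a b x + d b c x + d a c x)
    (hZ : ∀ a b : X, d a b b = 0) (a b c : X) : 0 ≤ d a b c := by
  have h := hTetr a b b c
  rw [hZ, d_rotate hSym₁ hSym₂ b b c, d_rotate hSym₁ hSym₂ b c b, hZ] at h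
  linarith

theorem exists_separated_of_not_cauchy {φ : X → X → ℝ}
    (hφ : ∀ x y : X, IsLUB (Set.range fun z => d x y z) (φ x y)) {x : ℕ → X}
    (hx : ¬ ∀ ε > (0 : ℝ), ∃ N : ℕ, ∀ n ≥ N, ∀ m ≥ N, φ (x n) (x m) < ε) :
    ∃ c > (0 : ℝ), ∀ N : ℕ, ∃ n ≥ N, ∃ m ≥ N, ∃ z, c < d (x n) (x m) z := by
  push Not at hx
  obtain ⟨ε, hε, hfar⟩ := hx
  refine ⟨ε / 2, by positivity, fun N => ?_⟩
  obtain ⟨n, hn, m, hm, hnm⟩ := hfar N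
  obtain ⟨_, ⟨z, rfl⟩, hz, -⟩ := (hφ (x n) (x m)).exists_between (by linarith : ε / 2 < _)
  exact ⟨n, hn, m, hm, z, hz⟩

theorem tendsto_d_of_isLim (hSym₁ : ∀ x y z : X, d x y z = d y x z)
    (hSym₂ : ∀ x y z : X, d x y z = d x z y)
    (hTetr : ∀ a b c x : X, d a b c ≤ d a b x + d b c x + d a c x)
    (hZ : ∀ a b : X, d a b b = 0)
    (hTrans : ∀ a b c x y : X, d a b x * d c x y ≤ d a x y + d b x y) {x : ℕ → X}
    (hsep : ∃ c > (0 : ℝ), ∀ N : ℕ, ∃ n ≥ N, ∃ m ≥ N, ∃ z, c < d (x n) (x m) z)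
    {y y' : X} (hy : IsLim d y x) (hy' : IsLim d y' x) :
    Tendsto (fun i => d y y' (x i)) atTop (𝓝 0) := by
  obtain ⟨c, hc, hsep⟩ := hsep
  refine tendsto_order.2
    ⟨fun a ha => .of_forall fun i => ha.trans_le (d_nonneg hSym₁ hSym₂ hTetr hZ _ _ _),
      fun θ hθ => ?_⟩
  set η := min (c * θ / 4) (θ / 4)
  have hη : 0 < η := by positivity
  obtain ⟨N₁, hN₁⟩ := hy η hη
  obtain ⟨N₂, hN₂⟩ := hy' η hη
  obtain ⟨n, hn, m, hm, z, hz⟩ := hsep (max N₁ N₂)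
  rw [ge_iff_le, max_le_iff] at hn hm
  have hn_small : d y y' (x n) < θ / 2 := by
    have h := hTrans y y' z (x n) (x m)
    rw [d_rotate hSym₁ hSym₂ z] at h
    have h₁ := hN₁ n hn.1 m hm.1
    have h₂ := hN₂ n hn.2 m hm.2
    have hηc : η ≤ c * θ / 4 := min_le_left _ _
    have : d y y' (x n) * c < θ / 2 * c := by
      nlinarith [mul_le_mul_of_nonneg_left hz.le (d_nonneg hSym₁ hSym₂ hTetr hZ y y' (x n))]
    exact lt_of_mul_lt_mul_right this hc.le
  filter_upwards [eventually_ge_atTop (max N₁ N₂)] with i hi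
  rw [max_le_iff] at hi
  have hηθ : η ≤ θ / 4 := min_le_right _ _
  calc d y y' (x i) ≤ d y y' (x n) + d y' (x i) (x n) + d y (x i) (x n) := hTetr _ _ _ _
    _ < θ / 2 + η + η := by gcongr <;> [exact hN₂ i hi.2 n hn.2; exact hN₁ i hi.1 n hn.1]
    _ ≤ θ := by linarith

theorem tendsto_d_of_colinear (hSym₁ : ∀ x y z : X, d x y z = d y x z)
    (hSym₂ : ∀ x y z : X, d x y z = d x z y)
    (hTetr : ∀ a b c x : X, d a b c ≤ d a b x + d b c x + d a c x)
    (hZ : ∀ a b : X, d a b b = 0)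
    (hTrans : ∀ a b c x y : X, d a b x * d c x y ≤ d a x y + d b x y)
    {y y' y'' z : X} (hcol : d y y' y'' = 0) (hz : 0 < d y y' z) {x : ℕ → X}
    (h : Tendsto (fun i => d y y' (x i)) atTop (𝓝 0)) :
    Tendsto (fun i => d y y'' (x i)) atTop (𝓝 0) := by
  have key : ∀ w, d y y'' w * d y y' z ≤ d y y' w := by
    intro w
    have h := hTrans w y'' z y y'
    rwa [d_rotate hSym₁ hSym₂ w y'' y, hSym₁ y'' y, d_rotate hSym₁ hSym₂ z,
      d_rotate hSym₁ hSym₂ w, ← d_rotate hSym₁ hSym₂ y' y'' y, ← d_rotate hSym₁ hSym₂ y y' y'',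
      hcol, add_zero] at h
  refine squeeze_zero (fun i => d_nonneg hSym₁ hSym₂ hTetr hZ _ _ _)
    (fun i => (le_div_iff₀ hz).2 (key (x i))) ?_
  simpa using h.div_const (d y y' z)

theorem isLim_of_tendsto (hSym₁ : ∀ x y z : X, d x y z = d y x z)
    (hSym₂ : ∀ x y z : X, d x y z = d x z y)
    (hTetr : ∀ a b c x : X, d a b c ≤ d a b x + d b c x + d a c x)
    {x : ℕ → X} {y y'' : X} (hy : IsLim d y x)
    (h : Tendsto (fun i => d y y'' (x i)) atTop (𝓝 0)) : IsLim d y'' x := by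
  intro ε hε
  obtain ⟨N₁, hN₁⟩ := hy (ε / 2) (by positivity)
  obtain ⟨N₂, hN₂⟩ := eventually_atTop.1 (h.eventually (gt_mem_nhds (by positivity : 0 < ε / 4)))
  refine ⟨max N₁ N₂, fun i hi j hj => ?_⟩
  rw [ge_iff_le, max_le_iff] at hi hj
  calc d y'' (x i) (x j) ≤ d y'' (x i) y + d (x i) (x j) y + d y'' (x j) y := hTetr _ _ _ _
    _ = d y y'' (x i) + d y (x i) (x j) + d y y'' (x j) := by
      rw [← d_rotate hSym₁ hSym₂ y, ← d_rotate hSym₁ hSym₂ y, ← d_rotate hSym₁ hSym₂ y]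
    _ < ε / 4 + ε / 2 + ε / 4 := by
      gcongr <;> [exact hN₂ i hi.2; exact hN₁ i hi.1 j hj.1; exact hN₂ j hj.2]
    _ = ε := by ring

end

theorem stmt_11_general {X : Type*} (d : X → X → X → ℝ) (φ : X → X → ℝ)
    (hSym₁ : ∀ x y z : X, d x y z = d y x z)
    (hSym₂ : ∀ x y z : X, d x y z = d x z y)
    (hTetr : ∀ a b c x : X, d a b c ≤ d a b x + d b c x + d a c x)
    (hZ : ∀ a b : X, d a b b = 0)
    (hTrans : ∀ a b c x y : X, d a b x * d c x y ≤ d a x y + d b x y)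
    (hφ : ∀ x y : X, IsLUB (Set.range fun z => d x y z) (φ x y))
    (x : ℕ → X)
    (hnotCauchy : ¬ (∀ ε > (0 : ℝ), ∃ N : ℕ, ∀ n ≥ N, ∀ m ≥ N, φ (x n) (x m) < ε))
    (y y' y'' : X)
    (hy : ∀ ε > (0 : ℝ), ∃ N : ℕ, ∀ i ≥ N, ∀ j ≥ N, d y (x i) (x j) < ε)
    (hy' : ∀ ε > (0 : ℝ), ∃ N : ℕ, ∀ i ≥ N, ∀ j ≥ N, d y' (x i) (x j) < ε)
    (hφyy' : 0 < φ y y')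
    (hcol : d y y' y'' = 0) :
    ∀ ε > (0 : ℝ), ∃ N : ℕ, ∀ i ≥ N, ∀ j ≥ N, d y'' (x i) (x j) < ε := by
  obtain ⟨_, ⟨z, rfl⟩, hz, -⟩ := (hφ y y').exists_between hφyy'
  have hyy' : Tendsto (fun i => d y y' (x i)) atTop (𝓝 0) :=
    tendsto_d_of_isLim hSym₁ hSym₂ hTetr hZ hTrans
      (exists_separated_of_not_cauchy hφ hnotCauchy) hy hy'
  exact isLim_of_tendsto hSym₁ hSym₂ hTetr hy
    (tendsto_d_of_colinear hSym₁ hSym₂ hTetr hZ hTrans hcol hz hyy')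

theorem stmt_11 {X : Type*} (d : X → X → X → ℝ) (φ : X → X → ℝ)
    (hSym₁ : ∀ x y z : X, d x y z = d y x z)
    (hSym₂ : ∀ x y z : X, d x y z = d x z y)
    (hTetr : ∀ a b c x : X, d a b c ≤ d a b x + d b c x + d a c x)
    (hZ : ∀ a b : X, d a b b = 0)
    (hN : ∀ a b : X, a ≠ b → ∃ c : X, d a b c ≠ 0)
    (hB : ∀ x y z : X, d x y z ≤ 1)
    (hTrans : ∀ a b c x y : X, d a b x * d c x y ≤ d a x y + d b x y)
    (hφ : ∀ x y : X, IsLUB (Set.range fun z => d x y z) (φ x y))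
    (x : ℕ → X)
    (hnotCauchy : ¬ (∀ ε > (0 : ℝ), ∃ N : ℕ, ∀ n ≥ N, ∀ m ≥ N, φ (x n) (x m) < ε))
    (y y' y'' : X)
    (hy : ∀ ε > (0 : ℝ), ∃ N : ℕ, ∀ i ≥ N, ∀ j ≥ N, d y (x i) (x j) < ε)
    (hy' : ∀ ε > (0 : ℝ), ∃ N : ℕ, ∀ i ≥ N, ∀ j ≥ N, d y' (x i) (x j) < ε)
    (hφyy' : 0 < φ y y')
    (hcol : d y y' y'' = 0) :
    ∀ ε > (0 : ℝ), ∃ N : ℕ, ∀ i ≥ N, ∀ j ≥ N, d y'' (x i) (x j) < ε :=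
  stmt_11_general d φ hSym₁ hSym₂ hTetr hZ hTrans hφ x hnotCauchy y y' y'' hy hy' hφyy' hcol
end

section
/- Let X be a set with d : X × X × X → ℝ satisfying (Sym), (Tetr), (Z), (N), (B) and (Trans), such that (X,φ) is compact, and let F : X → X satisfy d(F(x),F(y),F(z)) ≤ k·d(x,y,z) for all x,y,z with 0 < k < 1. Fix x₀ ∈ X and define the sequence of iterates x_{i+1} := F(x_i). Then (x_i) is tri-Cauchy, and either (x_i) is Cauchy with respect to φ with a unique limit point y ∈ X, or the set Y ⊆ X of points y with LIM(y,(x_i)) is a line. -/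
/-!
Since `F` contracts `d` by the factor `k`, `d(xᵢ, xⱼ, xₗ) ≤ kᵐ` once `i, j, l ≥ m`, so the orbit is
tri-Cauchy. If it is also `φ`-Cauchy, a `φ`-convergent subsequence (compactness) forces the whole orbit
to converge, and (N) makes the limit unique. Otherwise there are arbitrarily late pairs `xₙ, xₘ` and
points `c` with `d(c, xₙ, xₘ)` bounded below; by (Trans) every two points `s, t` of the LIM set then
satisfy `d(s, t, xₙ) → 0`, and (Tetr) through `xₙ` makes every triple of the LIM set colinear.
Maximality: if `z` is colinear with the LIM set but not in it, compactness gives late pairs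
`xₐ → p`, `x_b → q` with `d(z, xₐ, x_b) ≥ ε`, where `p, q` lie in the LIM set; then `d(z, p, q) = 0`, and
(Tetr) bounds `d(z, xₐ, x_b)` by `2 φ(xₐ, p) + 2 φ(x_b, q)`, which tends to `0`.
-/

open Filter Topology

structure IsTwoMetric {X : Type*} (d : X → X → X → ℝ) : Prop where
  symm₁ : ∀ x y z, d x y z = d y x z
  symm₂ : ∀ x y z, d x y z = d x z y
  tetr : ∀ a b c x, d a b c ≤ d a b x + d b c x + d a c x
  eq_zero : ∀ a b, d a b b = 0

section TwoMetric

variable {X : Type*} {d : X → X → X → ℝ} {φ : X → X → ℝ}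

def IsSupDist (d : X → X → X → ℝ) (φ : X → X → ℝ) : Prop :=
  ∀ a b, IsLUB (Set.range (d a b)) (φ a b)

def IsSeqCompactWrt (φ : X → X → ℝ) : Prop :=
  ∀ u : ℕ → X, ∃ y, ∃ v : ℕ → ℕ, StrictMono v ∧ Tendsto (fun n => φ (u (v n)) y) atTop (𝓝 0)

def IsCauchyWrt (φ : X → X → ℝ) (x : ℕ → X) : Prop :=
  ∀ ε > (0 : ℝ), ∃ N : ℕ, ∀ n ≥ N, ∀ m ≥ N, φ (x n) (x m) < ε

def IsTriCauchy (d : X → X → X → ℝ) (x : ℕ → X) : Prop :=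
  ∀ ε > (0 : ℝ), ∃ m : ℕ, ∀ i ≥ m, ∀ j ≥ m, ∀ l ≥ m, d (x i) (x j) (x l) < ε

def limSet (d : X → X → X → ℝ) (x : ℕ → X) : Set X :=
  {y | ∀ ε > (0 : ℝ), ∃ N : ℕ, ∀ i ≥ N, ∀ j ≥ N, d y (x i) (x j) < ε}

theorem mem_limSet_iff {x : ℕ → X} {y : X} :
    y ∈ limSet d x ↔ ∀ ε > (0 : ℝ), ∀ᶠ ij : ℕ × ℕ in atTop, d y (x ij.1) (x ij.2) < ε := by
  simp only [limSet, Set.mem_ofPred_eq, eventually_atTop_prod_self']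

namespace IsTwoMetric

theorem nonneg (hd : IsTwoMetric d) (a b c : X) : 0 ≤ d a b c := by
  have h := hd.tetr a b b c
  rw [hd.eq_zero, hd.symm₂ b, hd.symm₁ b, hd.eq_zero] at h
  linarith

theorem le_phi (hφ : IsSupDist d φ) (a b c : X) : d a b c ≤ φ a b :=
  (hφ a b).1 ⟨c, rfl⟩

theorem le_phi₁ (hd : IsTwoMetric d) (hφ : IsSupDist d φ) (a b c : X) : d c a b ≤ φ a b := by
  rw [hd.symm₁, hd.symm₂]
  exact le_phi hφ a b c

theorem le_phi₂ (hd : IsTwoMetric d) (hφ : IsSupDist d φ) (a b c : X) : d a c b ≤ φ a b := by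
  rw [hd.symm₂]
  exact le_phi hφ a b c

theorem phi_le (hφ : IsSupDist d φ) {a b : X} {r : ℝ} (h : ∀ c, d a b c ≤ r) : φ a b ≤ r :=
  (hφ a b).2 <| by
    rintro _ ⟨c, rfl⟩
    exact h c

theorem phi_nonneg (hd : IsTwoMetric d) (hφ : IsSupDist d φ) (a b : X) : 0 ≤ φ a b :=
  (hd.nonneg a b b).trans (le_phi hφ a b b)

theorem phi_comm (hd : IsTwoMetric d) (hφ : IsSupDist d φ) (a b : X) : φ a b = φ b a :=
  (phi_le hφ fun c => hd.symm₁ a b c ▸ le_phi hφ b a c).antisymm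
    (phi_le hφ fun c => hd.symm₁ b a c ▸ le_phi hφ a b c)

theorem phi_le_two_mul_add (hd : IsTwoMetric d) (hφ : IsSupDist d φ) (a b c : X) :
    φ a b ≤ 2 * φ a c + φ b c :=
  phi_le hφ fun z => by
    have h := hd.tetr a b z c
    have h₁ := hd.le_phi₂ hφ a c b
    have h₂ := hd.le_phi₂ hφ b c z
    have h₃ := hd.le_phi₂ hφ a c z
    linarith

theorem exists_lt_of_lt_phi (hφ : IsSupDist d φ) {a b : X} {r : ℝ} (h : r < φ a b) :
    ∃ c, r < d a b c := by
  obtain ⟨_, ⟨c, rfl⟩, hc, -⟩ := (hφ a b).exists_between h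
  exact ⟨c, hc⟩

theorem eq_of_tendsto (hd : IsTwoMetric d) (hφ : IsSupDist d φ)
    (hN : ∀ a b : X, a ≠ b → ∃ c : X, d a b c ≠ 0) {x : ℕ → X} {y y' : X}
    (hy : Tendsto (fun n => φ (x n) y) atTop (𝓝 0))
    (hy' : Tendsto (fun n => φ (x n) y') atTop (𝓝 0)) : y = y' := by
  have hsum : Tendsto (fun n => 2 * φ (x n) y + φ (x n) y') atTop (𝓝 0) := by
    simpa using (hy.const_mul 2).add hy'
  have hφ0 : φ y y' ≤ 0 := ge_of_tendsto' hsum fun n => by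
    rw [hd.phi_comm hφ (x n), hd.phi_comm hφ (x n)]
    exact hd.phi_le_two_mul_add hφ y y' (x n)
  by_contra hne
  obtain ⟨c, hc⟩ := hN y y' hne
  exact hc ((le_phi hφ y y' c).trans hφ0 |>.antisymm (hd.nonneg y y' c))

theorem tendsto_of_isCauchyWrt (hd : IsTwoMetric d) (hφ : IsSupDist d φ) {x : ℕ → X}
    (hC : IsCauchyWrt φ x) {v : ℕ → ℕ} (hv : StrictMono v) {y : X}
    (hy : Tendsto (fun n => φ (x (v n)) y) atTop (𝓝 0)) :
    Tendsto (fun n => φ (x n) y) atTop (𝓝 0) := by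
  refine tendsto_order.2 ⟨fun r hr => Eventually.of_forall fun n => hr.trans_le
    (hd.phi_nonneg hφ _ _), fun ε hε => ?_⟩
  obtain ⟨N, hN⟩ := hC (ε / 4) (by positivity)
  obtain ⟨m, hm, hmN⟩ :=
    ((hy.eventually_lt_const (by positivity : (0 : ℝ) < ε / 4)).and (eventually_ge_atTop N)).exists
  filter_upwards [eventually_ge_atTop N] with n hn
  have h₁ := hN n hn (v m) (hmN.trans hv.le_apply)
  have h₂ := hd.phi_le_two_mul_add hφ (x n) y (x (v m))
  rw [hd.phi_comm hφ y] at h₂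
  linarith

theorem mem_limSet_of_tendsto (hd : IsTwoMetric d) (hφ : IsSupDist d φ) {x : ℕ → X}
    (hx : IsTriCauchy d x) {n : ℕ → ℕ} (hn : Tendsto n atTop atTop) {y : X}
    (hy : Tendsto (fun t => φ (x (n t)) y) atTop (𝓝 0)) : y ∈ limSet d x := by
  intro ε hε
  obtain ⟨M, hM⟩ := hx (ε / 3) (by positivity)
  obtain ⟨t, hty, htM⟩ :=
    ((hy.eventually_lt_const (by positivity : (0 : ℝ) < ε / 3)).and
      (hn.eventually_ge_atTop M)).exists
  refine ⟨M, fun i hi j hj => ?_⟩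
  have h := hd.tetr y (x i) (x j) (x (n t))
  have h₁ := hd.le_phi₂ hφ y (x (n t)) (x i)
  have h₂ := hd.le_phi₂ hφ y (x (n t)) (x j)
  have h₃ := hM i hi j hj (n t) htM
  rw [hd.phi_comm hφ] at h₁ h₂
  linarith

theorem mul_le_of_trans (hd : IsTwoMetric d)
    (hTrans : ∀ a b c x y : X, d a b x * d c x y ≤ d a x y + d b x y)
    {a b c : X} {r : ℝ} (hr : r ≤ d c a b) (s t : X) :
    r * d s t a ≤ d s a b + d t a b :=
  calc r * d s t a ≤ d c a b * d s t a := mul_le_mul_of_nonneg_right hr (hd.nonneg s t a)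
    _ = d s t a * d c a b := mul_comm _ _
    _ ≤ d s a b + d t a b := hTrans s t c a b

theorem limSet_colinear (hd : IsTwoMetric d) (hφ : IsSupDist d φ)
    (hTrans : ∀ a b c x y : X, d a b x * d c x y ≤ d a x y + d b x y)
    {x : ℕ → X} (hC : ¬ IsCauchyWrt φ x) :
    ∀ p ∈ limSet d x, ∀ q ∈ limSet d x, ∀ r ∈ limSet d x, d p q r = 0 := by
  obtain ⟨ε₀, hε₀, hfar⟩ :
      ∃ ε₀ > (0 : ℝ), ¬ ∀ᶠ ij : ℕ × ℕ in atTop, φ (x ij.1) (x ij.2) < ε₀ := by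
    simpa only [IsCauchyWrt, eventually_atTop_prod_self', not_forall, exists_prop] using hC
  intro p hp q hq r hr
  rw [mem_limSet_iff] at hp hq hr
  refine (le_of_forall_pos_le_add fun ε hε => ?_).antisymm (hd.nonneg p q r)
  set δ := ε₀ * ε / 12
  have hδ : 0 < δ := by positivity
  obtain ⟨⟨n, m⟩, hnm, hpnm, hqnm, hrnm⟩ :=
    ((not_eventually.1 hfar).and_eventually ((hp δ hδ).and ((hq δ hδ).and (hr δ hδ)))).exists
  obtain ⟨c, hc⟩ := exists_lt_of_lt_phi hφ (half_lt_self hε₀ |>.trans_le (not_lt.1 hnm))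
  have hc' : ε₀ / 2 ≤ d c (x n) (x m) := by
    rw [hd.symm₁, hd.symm₂]
    exact hc.le
  have hpq := hd.mul_le_of_trans hTrans hc' p q
  have hqr := hd.mul_le_of_trans hTrans hc' q r
  have hpr := hd.mul_le_of_trans hTrans hc' p r
  have htetr := mul_le_mul_of_nonneg_left (hd.tetr p q r (x n)) (half_pos hε₀).le
  have key : ε₀ / 2 * d p q r ≤ ε₀ / 2 * ε := by
    simp only [δ] at hpnm hqnm hrnm
    linarith
  linarith [le_of_mul_le_mul_left key (half_pos hε₀)]

theorem d_le_of_colinear (hd : IsTwoMetric d) (hφ : IsSupDist d φ) {z p q : X}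
    (h : d z p q = 0) (a b : X) : d z a b ≤ 2 * φ a p + 2 * φ b q := by
  have h₁ := hd.tetr z a b q
  have h₂ := hd.tetr z a q p
  have h₃ := hd.le_phi₁ hφ b q a
  have h₄ := hd.le_phi₁ hφ b q z
  have h₅ := hd.le_phi₁ hφ a p z
  have h₆ := hd.le_phi₂ hφ a p q
  rw [hd.symm₂ z q p, h] at h₂
  linarith

theorem exists_subseq_tendsto_pair (hcompact : IsSeqCompactWrt φ) (u u' : ℕ → X) :
    ∃ p q : X, ∃ ψ : ℕ → ℕ, StrictMono ψ ∧ Tendsto (fun n => φ (u (ψ n)) p) atTop (𝓝 0) ∧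
      Tendsto (fun n => φ (u' (ψ n)) q) atTop (𝓝 0) := by
  obtain ⟨p, v, hv, hp⟩ := hcompact u
  obtain ⟨q, w, hw, hq⟩ := hcompact (u' ∘ v)
  exact ⟨p, q, v ∘ w, hv.comp hw, hp.comp hw.tendsto_atTop, hq⟩

theorem limSet_maximal (hd : IsTwoMetric d) (hφ : IsSupDist d φ) (hcompact : IsSeqCompactWrt φ)
    {x : ℕ → X} (hx : IsTriCauchy d x) {Z : Set X} (hYZ : limSet d x ⊆ Z)
    (hZ : ∀ p ∈ Z, ∀ q ∈ Z, ∀ r ∈ Z, d p q r = 0) : Z ⊆ limSet d x := by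
  intro z hz
  by_contra hzY
  simp only [limSet, Set.mem_ofPred_eq, not_forall, not_exists, not_lt] at hzY
  obtain ⟨ε, hε, hfar⟩ := hzY
  choose a ha b hb hab using hfar
  obtain ⟨p, q, ψ, hψ, hp, hq⟩ :=
    exists_subseq_tendsto_pair hcompact (fun t => x (a t)) (fun t => x (b t))
  have hpY := hd.mem_limSet_of_tendsto hφ hx
    ((tendsto_atTop_mono ha tendsto_id).comp hψ.tendsto_atTop) hp
  have hqY := hd.mem_limSet_of_tendsto hφ hx
    ((tendsto_atTop_mono hb tendsto_id).comp hψ.tendsto_atTop) hq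
  have hbound : Tendsto (fun t => 2 * φ (x (a (ψ t))) p + 2 * φ (x (b (ψ t))) q) atTop (𝓝 0) := by
    simpa using (hp.const_mul 2).add (hq.const_mul 2)
  obtain ⟨t, ht⟩ := (hbound.eventually_lt_const hε).exists
  have := hd.d_le_of_colinear hφ (hZ z hz p (hYZ hpY) q (hYZ hqY)) (x (a (ψ t))) (x (b (ψ t)))
  linarith [hab (ψ t)]

end IsTwoMetric

theorem isTriCauchy_of_contraction (hB : ∀ x y z : X, d x y z ≤ 1)
    {F : X → X} {k : ℝ} (hk0 : 0 ≤ k) (hk1 : k < 1)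
    (hF : ∀ x y z : X, d (F x) (F y) (F z) ≤ k * d x y z)
    {x : ℕ → X} (hxs : ∀ i : ℕ, x (i + 1) = F (x i)) : IsTriCauchy d x := by
  have hiter : ∀ m a b c : ℕ,
      d (x (a + m)) (x (b + m)) (x (c + m)) ≤ k ^ m * d (x a) (x b) (x c) := by
    intro m
    induction m with
    | zero => simp
    | succ m ih =>
      intro a b c
      simp only [← add_assoc, hxs]
      calc d (F (x (a + m))) (F (x (b + m))) (F (x (c + m)))
          ≤ k * d (x (a + m)) (x (b + m)) (x (c + m)) := hF _ _ _
        _ ≤ k * (k ^ m * d (x a) (x b) (x c)) := mul_le_mul_of_nonneg_left (ih a b c) hk0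
        _ = k ^ (m + 1) * d (x a) (x b) (x c) := by ring
  intro ε hε
  obtain ⟨m, hm⟩ := exists_pow_lt_of_lt_one hε hk1
  refine ⟨m, fun i hi j hj l hl => ?_⟩
  have h := hiter m (i - m) (j - m) (l - m)
  rw [Nat.sub_add_cancel hi, Nat.sub_add_cancel hj, Nat.sub_add_cancel hl] at h
  calc d (x i) (x j) (x l) ≤ k ^ m * d (x (i - m)) (x (j - m)) (x (l - m)) := h
    _ ≤ k ^ m := mul_le_of_le_one_right (pow_nonneg hk0 m) (hB _ _ _)
    _ < ε := hm

end TwoMetric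

theorem stmt_16_general {X : Type*} (d : X → X → X → ℝ) (φ : X → X → ℝ)
    (hSym₁ : ∀ x y z : X, d x y z = d y x z)
    (hSym₂ : ∀ x y z : X, d x y z = d x z y)
    (hTetr : ∀ a b c x : X, d a b c ≤ d a b x + d b c x + d a c x)
    (hZ : ∀ a b : X, d a b b = 0)
    (hN : ∀ a b : X, a ≠ b → ∃ c : X, d a b c ≠ 0)
    (hB : ∀ x y z : X, d x y z ≤ 1)
    (hTrans : ∀ a b c x y : X, d a b x * d c x y ≤ d a x y + d b x y)
    (hφ : ∀ x y : X, IsLUB (Set.range fun z => d x y z) (φ x y))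
    (hcompact : ∀ u : ℕ → X, ∃ y : X, ∃ v : ℕ → ℕ, StrictMono v ∧
      Tendsto (fun n => φ (u (v n)) y) atTop (𝓝 0))
    (F : X → X) (k : ℝ) (hk0 : 0 < k) (hk1 : k < 1)
    (hF : ∀ x y z : X, d (F x) (F y) (F z) ≤ k * d x y z)
    (x : ℕ → X) (hxs : ∀ i : ℕ, x (i + 1) = F (x i)) :
    (∀ ε > (0 : ℝ), ∃ m : ℕ, ∀ i ≥ m, ∀ j ≥ m, ∀ l ≥ m, d (x i) (x j) (x l) < ε) ∧
    (((∀ ε > (0 : ℝ), ∃ N : ℕ, ∀ n ≥ N, ∀ m ≥ N, φ (x n) (x m) < ε) ∧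
        ∃! y : X, Tendsto (fun n => φ (x n) y) atTop (𝓝 0)) ∨
      ((∀ p ∈ {y : X | ∀ ε > (0 : ℝ), ∃ N : ℕ, ∀ i ≥ N, ∀ j ≥ N, d y (x i) (x j) < ε},
          ∀ q ∈ {y : X | ∀ ε > (0 : ℝ), ∃ N : ℕ, ∀ i ≥ N, ∀ j ≥ N, d y (x i) (x j) < ε},
          ∀ r ∈ {y : X | ∀ ε > (0 : ℝ), ∃ N : ℕ, ∀ i ≥ N, ∀ j ≥ N, d y (x i) (x j) < ε},
          d p q r = 0) ∧
        ∀ Z : Set X,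
          {y : X | ∀ ε > (0 : ℝ), ∃ N : ℕ, ∀ i ≥ N, ∀ j ≥ N, d y (x i) (x j) < ε} ⊆ Z →
          (∀ p ∈ Z, ∀ q ∈ Z, ∀ r ∈ Z, d p q r = 0) →
          Z = {y : X | ∀ ε > (0 : ℝ), ∃ N : ℕ, ∀ i ≥ N, ∀ j ≥ N, d y (x i) (x j) < ε})) := by
  have hd : IsTwoMetric d := ⟨hSym₁, hSym₂, hTetr, hZ⟩
  have hx : IsTriCauchy d x := isTriCauchy_of_contraction hB hk0.le hk1 hF hxs
  refine ⟨hx, ?_⟩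
  by_cases hC : IsCauchyWrt φ x
  · obtain ⟨y, v, hv, hy⟩ := hcompact x
    exact .inl ⟨hC, y, hd.tendsto_of_isCauchyWrt hφ hC hv hy,
      fun y' hy' => hd.eq_of_tendsto hφ hN hy' (hd.tendsto_of_isCauchyWrt hφ hC hv hy)⟩
  · exact .inr ⟨hd.limSet_colinear hφ hTrans hC,
      fun Z hYZ hZ => (hd.limSet_maximal hφ hcompact hx hYZ hZ).antisymm hYZ⟩

theorem stmt_16 {X : Type*} (d : X → X → X → ℝ) (φ : X → X → ℝ)
    (hSym₁ : ∀ x y z : X, d x y z = d y x z)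
    (hSym₂ : ∀ x y z : X, d x y z = d x z y)
    (hTetr : ∀ a b c x : X, d a b c ≤ d a b x + d b c x + d a c x)
    (hZ : ∀ a b : X, d a b b = 0)
    (hN : ∀ a b : X, a ≠ b → ∃ c : X, d a b c ≠ 0)
    (hB : ∀ x y z : X, d x y z ≤ 1)
    (hTrans : ∀ a b c x y : X, d a b x * d c x y ≤ d a x y + d b x y)
    (hφ : ∀ x y : X, IsLUB (Set.range fun z => d x y z) (φ x y))
    (hcompact : ∀ u : ℕ → X, ∃ y : X, ∃ v : ℕ → ℕ, StrictMono v ∧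
      Tendsto (fun n => φ (u (v n)) y) atTop (𝓝 0))
    (F : X → X) (k : ℝ) (hk0 : 0 < k) (hk1 : k < 1)
    (hF : ∀ x y z : X, d (F x) (F y) (F z) ≤ k * d x y z)
    (x₀ : X) (x : ℕ → X) (hx0 : x 0 = x₀) (hxs : ∀ i : ℕ, x (i + 1) = F (x i)) :
    (∀ ε > (0 : ℝ), ∃ m : ℕ, ∀ i ≥ m, ∀ j ≥ m, ∀ l ≥ m, d (x i) (x j) (x l) < ε) ∧
    (((∀ ε > (0 : ℝ), ∃ N : ℕ, ∀ n ≥ N, ∀ m ≥ N, φ (x n) (x m) < ε) ∧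
        ∃! y : X, Tendsto (fun n => φ (x n) y) atTop (𝓝 0)) ∨
      ((∀ p ∈ {y : X | ∀ ε > (0 : ℝ), ∃ N : ℕ, ∀ i ≥ N, ∀ j ≥ N, d y (x i) (x j) < ε},
          ∀ q ∈ {y : X | ∀ ε > (0 : ℝ), ∃ N : ℕ, ∀ i ≥ N, ∀ j ≥ N, d y (x i) (x j) < ε},
          ∀ r ∈ {y : X | ∀ ε > (0 : ℝ), ∃ N : ℕ, ∀ i ≥ N, ∀ j ≥ N, d y (x i) (x j) < ε},
          d p q r = 0) ∧
        ∀ Z : Set X,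
          {y : X | ∀ ε > (0 : ℝ), ∃ N : ℕ, ∀ i ≥ N, ∀ j ≥ N, d y (x i) (x j) < ε} ⊆ Z →
          (∀ p ∈ Z, ∀ q ∈ Z, ∀ r ∈ Z, d p q r = 0) →
          Z = {y : X | ∀ ε > (0 : ℝ), ∃ N : ℕ, ∀ i ≥ N, ∀ j ≥ N, d y (x i) (x j) < ε})) :=
  stmt_16_general d φ hSym₁ hSym₂ hTetr hZ hN hB hTrans hφ hcompact F k hk0 hk1 hF x hxs
end
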